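/- arXiv:1104.4136 — 6 statements merged into one kernel-verified Lean document; each statement's English description precedes it below -/
import Mathlib

section
/- Let p be an odd prime, let ι be a finite index set, and let a, b : ι → ℕ be functions such that ∑_{j∈ι} a(j) = ∑_{j∈ι} b(j) ≤ 2p − 2 and such that p divides a(j) − b(j) (as integers) for every j ∈ ι. Then either a = b, or there exist two distinct indices j₁ ≠ j₂ such that a(j₁) = b(j₁) + p, b(j₂) = a(j₂) + p, and a(j) = b(j) for every j ∉ {j₁, j₂}. -/
/-!
Every entry of `a` and `b` is at most `∑ a ≤ 2p - 2 < 2p`, so each difference `a j - b j`, being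
a multiple of `p`, is `-p`, `0` or `p`. Two entries `≥ p` would already sum to `2p`, so at most
one difference equals `p` and at most one equals `-p`; since the differences sum to zero, if any
is nonzero then exactly one is `p` and exactly one is `-p`.
-/

open Finset

theorem Finset.exists_lt_of_sum_eq_of_ne {ι M : Type*} [Fintype ι] [AddCommMonoid M]
    [LinearOrder M] [IsOrderedCancelAddMonoid M] {f g : ι → M}
    (hsum : ∑ i, f i = ∑ i, g i) (hne : f ≠ g) : ∃ i, f i < g i := by
  by_contra! hle
  exact hne <| funext fun i ↦
    (((sum_eq_sum_iff_of_le fun i _ ↦ hle i).mp hsum.symm) i (mem_univ i)).symm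

theorem Nat.eq_add_or_eq_or_eq_add_of_dvd_sub {p m n : ℕ} (hdvd : (p : ℤ) ∣ (m : ℤ) - n)
    (hm : m < 2 * p) (hn : n < 2 * p) : m + p = n ∨ m = n ∨ m = n + p := by
  obtain ⟨k, hk⟩ := hdvd
  have hk_lt : k < 2 := by
    by_contra! h
    nlinarith
  have hk_gt : -2 < k := by
    by_contra! h
    nlinarith
  obtain rfl | rfl | rfl : k = -1 ∨ k = 0 ∨ k = 1 := by omega
  all_goals omega

theorem eq_of_le_of_le_of_sum_lt_two_mul {ι : Type*} [Fintype ι] {f : ι → ℕ} {p : ℕ}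
    (hsum : ∑ k, f k < 2 * p) {i j : ι} (hi : p ≤ f i) (hj : p ≤ f j) : i = j := by
  by_contra hij
  have := add_le_sum (fun k _ ↦ Nat.zero_le (f k)) (mem_univ i) (mem_univ j) hij
  omega

theorem stmt0_general {ι : Type*} [Fintype ι] (p : ℕ)
    (a b : ι → ℕ)
    (hsum : ∑ j, a j = ∑ j, b j)
    (hle : ∑ j, a j ≤ 2 * p - 2)
    (hdvd : ∀ j, (p : ℤ) ∣ (a j : ℤ) - (b j : ℤ)) :
    a = b ∨
      ∃ j₁ j₂, j₁ ≠ j₂ ∧ a j₁ = b j₁ + p ∧ b j₂ = a j₂ + p ∧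
        ∀ j, j ≠ j₁ → j ≠ j₂ → a j = b j := by
  by_cases hab : a = b
  · exact Or.inl hab
  obtain ⟨j₁, hj₁⟩ := exists_lt_of_sum_eq_of_ne hsum.symm (Ne.symm hab)
  obtain ⟨j₂, hj₂⟩ := exists_lt_of_sum_eq_of_ne hsum hab
  have ha_le : ∀ j, a j ≤ ∑ k, a k := fun j ↦
    single_le_sum (fun k _ ↦ Nat.zero_le (a k)) (mem_univ j)
  have hb_le : ∀ j, b j ≤ ∑ k, b k := fun j ↦
    single_le_sum (fun k _ ↦ Nat.zero_le (b k)) (mem_univ j)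
  have hp : 2 ≤ p := by have := ha_le j₁; omega
  have hdiff : ∀ j, a j + p = b j ∨ a j = b j ∨ a j = b j + p := fun j ↦
    Nat.eq_add_or_eq_or_eq_add_of_dvd_sub (hdvd j) (by have := ha_le j; omega)
      (by have := hb_le j; omega)
  have ha_unique : ∀ {i j}, p ≤ a i → p ≤ a j → i = j :=
    eq_of_le_of_le_of_sum_lt_two_mul (by omega)
  have hb_unique : ∀ {i j}, p ≤ b i → p ≤ b j → i = j :=
    eq_of_le_of_le_of_sum_lt_two_mul (by omega)
  have hj₁_eq : a j₁ = b j₁ + p := by have := hdiff j₁; omega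
  have hj₂_eq : b j₂ = a j₂ + p := by have := hdiff j₂; omega
  refine Or.inr ⟨j₁, j₂, fun h ↦ by subst h; omega, hj₁_eq, hj₂_eq, fun j hne₁ hne₂ ↦ ?_⟩
  rcases hdiff j with h | h | h
  · exact absurd (hb_unique (j := j₂) (by omega) (by omega)) hne₂
  · exact h
  · exact absurd (ha_unique (j := j₁) (by omega) (by omega)) hne₁

/-- Let p be an odd prime, ι a finite index set, a, b : ι → ℕ with
∑ a = ∑ b ≤ 2p − 2 and p ∣ a j − b j (in ℤ) for every j.  Then either a = b, or
there exist distinct indices j₁ ≠ j₂ with a j₁ = b j₁ + p, b j₂ = a j₂ + p, and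
a j = b j for every j ∉ {j₁, j₂}. -/
theorem stmt0 {ι : Type*} [Fintype ι] (p : ℕ) (hp : p.Prime) (hodd : Odd p)
    (a b : ι → ℕ)
    (hsum : ∑ j, a j = ∑ j, b j)
    (hle : ∑ j, a j ≤ 2 * p - 2)
    (hdvd : ∀ j, (p : ℤ) ∣ (a j : ℤ) - (b j : ℤ)) :
    a = b ∨
      ∃ j₁ j₂, j₁ ≠ j₂ ∧ a j₁ = b j₁ + p ∧ b j₂ = a j₂ + p ∧
        ∀ j, j ≠ j₁ → j ≠ j₂ → a j = b j :=
  stmt0_general p a b hsum hle hdvd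
end

section
/- Let p be an odd prime and let a, b : Fin ((p−1)/2) → ℕ satisfy: (i) ∑ a(j) = ∑ b(j) ≤ 2p − 2; (ii) p divides a(j) − b(j) (as integers) for every j; (iii) all the values are mutually congruent modulo p, i.e. a(j) ≡ a(j′) ≡ b(j′′) (mod p) for all indices j, j′, j′′. Then either a = b, or there exist c ∈ {0, 1} and two distinct indices j₁ ≠ j₂ such that a(j₁) = b(j₂) = p + c, b(j₁) = a(j₂) = c, a(j) = b(j) = c for every j ∉ {j₁, j₂}, and ∑ a(j) = c·(p−1)/2 + p. -/
/-!
All the values `a j`, `b j` lie in one residue class `c` modulo `p`, so `a = c + p • q` and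
`b = c + p • r` with `∑ q = ∑ r`. The bound `∑ a ≤ 2p - 2` forces `∑ q ≤ 1`, so when `a ≠ b` the
quotients `q` and `r` are distinct unit vectors. Then `((p - 1) / 2) * c + p ≤ 2p - 2`, which for
odd `p` leaves only `c ≤ 1`.
-/

open Finset

theorem Fintype.exists_eq_pi_single_of_sum_eq_one {ι : Type*} [Fintype ι] [DecidableEq ι]
    {q : ι → ℕ} (h : ∑ i, q i = 1) : ∃ i, q = Pi.single i 1 := by
  obtain ⟨i, hi⟩ := (Finsupp.sum_eq_one_iff (Finsupp.equivFunOnFinite.symm q)).1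
    (by rwa [Finsupp.sum_fintype _ _ (fun _ => rfl)])
  exact ⟨i, by simpa [Finsupp.single_eq_pi_single] using congrArg DFunLike.coe hi⟩

theorem exists_ne_eq_pi_single_of_sum_eq_of_sum_le_one {ι : Type*} [Fintype ι] [DecidableEq ι]
    {q r : ι → ℕ} (hsum : ∑ i, q i = ∑ i, r i) (hle : ∑ i, q i ≤ 1) (hne : q ≠ r) :
    ∃ i j, i ≠ j ∧ q = Pi.single i 1 ∧ r = Pi.single j 1 := by
  have hq : ∑ i, q i = 1 := by
    refine le_antisymm hle (Nat.one_le_iff_ne_zero.2 fun h0 => hne ?_)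
    have hr0 := hsum ▸ h0
    simp only [sum_eq_zero_iff, mem_univ, true_implies] at h0 hr0
    exact funext fun i => (h0 i).trans (hr0 i).symm
  obtain ⟨i, rfl⟩ := Fintype.exists_eq_pi_single_of_sum_eq_one hq
  obtain ⟨j, rfl⟩ := Fintype.exists_eq_pi_single_of_sum_eq_one (hsum ▸ hq)
  exact ⟨i, j, fun hij => hne (hij ▸ rfl), rfl, rfl⟩

theorem mod_eq_of_forall_dvd_sub {ι : Type*} {p : ℕ} {a b : ι → ℕ}
    (h : ∀ i j, (p : ℤ) ∣ (a i : ℤ) - (b j : ℤ)) (i₀ : ι) :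
    (∀ i, a i % p = b i₀ % p) ∧ ∀ j, b j % p = b i₀ % p :=
  ⟨fun i => (Nat.modEq_iff_dvd.2 (h i i₀)).symm,
    fun j => (Nat.modEq_iff_dvd.2 (h i₀ j)).trans (Nat.modEq_iff_dvd.2 (h i₀ i₀)).symm⟩

theorem Fintype.sum_eq_card_mul_add_mul_sum_div {ι : Type*} [Fintype ι] {p c : ℕ} {x : ι → ℕ}
    (hx : ∀ i, x i % p = c) : ∑ i, x i = Fintype.card ι * c + p * ∑ i, x i / p := by
  calc ∑ i, x i = ∑ i, (c + p * (x i / p)) :=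
        Finset.sum_congr rfl fun i _ => by rw [← hx i, Nat.mod_add_div]
    _ = _ := by rw [sum_add_distrib, sum_const, card_univ, smul_eq_mul, mul_sum]

theorem exists_ne_eq_add_mul_pi_single_of_mod_eq {ι : Type*} [Fintype ι] [DecidableEq ι]
    {p c : ℕ} {a b : ι → ℕ} (ha : ∀ i, a i % p = c) (hb : ∀ i, b i % p = c)
    (hsum : ∑ i, a i = ∑ i, b i) (hlt : ∑ i, a i < 2 * p) (hne : a ≠ b) :
    ∃ i j, i ≠ j ∧ (∀ k, a k = c + p * Pi.single (M := fun _ => ℕ) i 1 k) ∧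
      ∀ k, b k = c + p * Pi.single (M := fun _ => ℕ) j 1 k := by
  have hp : 0 < p := by omega
  have hsa := Fintype.sum_eq_card_mul_add_mul_sum_div ha
  have hsb := Fintype.sum_eq_card_mul_add_mul_sum_div hb
  have hqsum : ∑ i, a i / p = ∑ i, b i / p := Nat.eq_of_mul_eq_mul_left hp (by omega)
  have hqle : ∑ i, a i / p ≤ 1 := by
    by_contra! h
    have := Nat.mul_le_mul_left p h
    omega
  have hqne : (a · / p) ≠ (b · / p) := fun h => hne <| funext fun k => by
    rw [← Nat.mod_add_div (a k) p, ← Nat.mod_add_div (b k) p, ha, hb, congrFun h k]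
  obtain ⟨i, j, hij, hqa, hqb⟩ := exists_ne_eq_pi_single_of_sum_eq_of_sum_le_one hqsum hqle hqne
  exact ⟨i, j, hij, fun k => by rw [← hqa, ← ha k, Nat.mod_add_div],
    fun k => by rw [← hqb, ← hb k, Nat.mod_add_div]⟩

theorem stmt1_general (p : ℕ) (hodd : Odd p)
    (a b : Fin ((p - 1) / 2) → ℕ)
    (hsum : ∑ j, a j = ∑ j, b j)
    (hle : ∑ j, a j ≤ 2 * p - 2)
    (hcongab : ∀ j j', (p : ℤ) ∣ (a j : ℤ) - (b j' : ℤ)) :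
    a = b ∨
      ∃ c, (c = 0 ∨ c = 1) ∧
        ∃ j₁ j₂, j₁ ≠ j₂ ∧
          a j₁ = p + c ∧ b j₂ = p + c ∧ b j₁ = c ∧ a j₂ = c ∧
          (∀ j, j ≠ j₁ → j ≠ j₂ → a j = c ∧ b j = c) ∧
          ∑ j, a j = c * ((p - 1) / 2) + p := by
  by_cases hab : a = b
  · exact .inl hab
  right
  obtain ⟨j₀, -⟩ := Function.ne_iff.1 hab
  obtain ⟨ha, hb⟩ := mod_eq_of_forall_dvd_sub hcongab j₀
  obtain ⟨j₁, j₂, hj, ha', hb'⟩ :=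
    exists_ne_eq_add_mul_pi_single_of_mod_eq ha hb hsum (by have := hodd.pos; omega) hab
  set c := b j₀ % p
  have hsa : ∑ j, a j = (p - 1) / 2 * c + p := by
    simp [ha', sum_add_distrib, ← mul_sum]
  have hc : c ≤ 1 := by
    obtain ⟨k, rfl⟩ := hodd
    by_contra! hc
    have := Nat.mul_le_mul_left ((2 * k + 1 - 1) / 2) hc
    have := j₀.pos
    omega
  refine ⟨c, by omega, j₁, j₂, hj, by simp [ha', add_comm], by simp [hb', add_comm],
    by simp [hb', hj], by simp [ha', hj.symm], fun j h₁ h₂ => by simp [ha', hb', h₁, h₂],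
    by rw [hsa, mul_comm]⟩

/-- Let p be an odd prime and a, b : Fin ((p−1)/2) → ℕ with
(i) ∑ a = ∑ b ≤ 2p − 2; (ii) p ∣ a j − b j (in ℤ) for every j; (iii) all
values mutually congruent mod p.  Then either a = b, or there exist c ∈ {0,1}
and distinct indices j₁ ≠ j₂ with a j₁ = b j₂ = p + c, b j₁ = a j₂ = c,
a j = b j = c for j ∉ {j₁, j₂}, and ∑ a = c·(p−1)/2 + p. -/
theorem stmt1 (p : ℕ) (hp : p.Prime) (hodd : Odd p)
    (a b : Fin ((p - 1) / 2) → ℕ)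
    (hsum : ∑ j, a j = ∑ j, b j)
    (hle : ∑ j, a j ≤ 2 * p - 2)
    (hdvd : ∀ j, (p : ℤ) ∣ (a j : ℤ) - (b j : ℤ))
    (hconga : ∀ j j', (p : ℤ) ∣ (a j : ℤ) - (a j' : ℤ))
    (hcongab : ∀ j j', (p : ℤ) ∣ (a j : ℤ) - (b j' : ℤ)) :
    a = b ∨
      ∃ c, (c = 0 ∨ c = 1) ∧
        ∃ j₁ j₂, j₁ ≠ j₂ ∧
          a j₁ = p + c ∧ b j₂ = p + c ∧ b j₁ = c ∧ a j₂ = c ∧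
          (∀ j, j ≠ j₁ → j ≠ j₂ → a j = c ∧ b j = c) ∧
          ∑ j, a j = c * ((p - 1) / 2) + p :=
  stmt1_general p hodd a b hsum hle hcongab
end

section
/- Let p be an odd prime and let a, b : ZMod p → ℕ be functions such that: a(0) = b(0) = 0; a(−j) = a(j) and b(−j) = b(j) for all j; ∑_{j ∈ ZMod p} a(j) = ∑_{j ∈ ZMod p} b(j) ≤ 4p − 4; p divides a(j) − b(j) (as integers) for every j; and a(j) ≡ b(j′) (mod p) for all nonzero j, j′. Then there exists a nonzero s ∈ ZMod p such that a(j) = b(s·j) for every j ∈ ZMod p. -/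
/-!
Write `a j = p * (a j / p) + a j % p`. The hypotheses make the residues of `a` and `b` agree
at `0` and at any two nonzero points, so `∑ a = ∑ b` forces the quotients `a / p` and `b / p`
to have equal sums, at most `3` because `∑ a < 4p`. A negation-invariant function vanishing
at `0` on `ZMod p`, `p` odd, has even sum, so the quotients are either both `0` or both the
indicator of a pair `{j, -j}`; in either case some `s ≠ 0` carries one to the other, and the
residues do not see `s`.
-/

open Finset

section NegInvariant

variable {G : Type*} [AddCommGroup G] [Fintype G]

theorem even_sum_of_neg_invariant (hG : ∀ j : G, -j = j → j = 0) {f : G → ℕ}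
    (hf0 : f 0 = 0) (hf : ∀ j, f (-j) = f j) : Even (∑ j, f j) := by
  rw [← ZMod.natCast_eq_zero_iff_even, Nat.cast_sum]
  refine sum_ninvolution (fun j => -j) (fun j => ?_) (fun j hj h => hj ?_) (by simp) (by simp)
  · rw [hf, ← Nat.cast_add, ZMod.natCast_eq_zero_iff_even]
    exact ⟨_, rfl⟩
  · rw [hG j h, hf0, Nat.cast_zero]

theorem exists_eq_pair_indicator_of_sum_eq_two [DecidableEq G] (hG : ∀ j : G, -j = j → j = 0)
    {f : G → ℕ} (hf0 : f 0 = 0) (hf : ∀ j, f (-j) = f j) (hsum : ∑ j, f j = 2) :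
    ∃ j₀ ≠ 0, ∀ j, f j = if j = j₀ ∨ j = -j₀ then 1 else 0 := by
  obtain ⟨j₀, -, hfj₀⟩ := exists_ne_zero_of_sum_ne_zero (hsum ▸ two_ne_zero : ∑ j, f j ≠ 0)
  have hj₀ : j₀ ≠ 0 := by rintro rfl; exact hfj₀ hf0
  have hneg : -j₀ ∈ univ.erase j₀ := mem_erase.2 ⟨fun h => hj₀ (hG j₀ h), mem_univ _⟩
  have hsplit : ∑ j, f j = 2 * f j₀ + ∑ j ∈ (univ.erase j₀).erase (-j₀), f j := by
    rw [← add_sum_erase _ _ (mem_univ j₀), ← add_sum_erase _ _ hneg, hf]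
    ring
  have hrest : ∑ j ∈ (univ.erase j₀).erase (-j₀), f j = 0 := by omega
  refine ⟨j₀, hj₀, fun j => ?_⟩
  split_ifs with hj
  · rcases hj with rfl | rfl
    · omega
    · rw [hf]; omega
  · push Not at hj
    exact sum_eq_zero_iff.1 hrest j (by simp [hj.1, hj.2])

end NegInvariant

theorem exists_eq_comp_mul_of_sum_eq_of_sum_le_three {K : Type*} [Field K] [Fintype K]
    [DecidableEq K] (hK : ringChar K ≠ 2) {f g : K → ℕ} (hf0 : f 0 = 0) (hg0 : g 0 = 0)
    (hf : ∀ j, f (-j) = f j) (hg : ∀ j, g (-j) = g j) (hsum : ∑ j, f j = ∑ j, g j)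
    (hle : ∑ j, f j ≤ 3) :
    ∃ s ≠ 0, ∀ j, f j = g (s * j) := by
  have hK' : ∀ j : K, -j = j → j = 0 := fun j => (Ring.eq_self_iff_eq_zero_of_char_ne_two hK).1
  obtain ⟨k, hk⟩ := even_sum_of_neg_invariant hK' hf0 hf
  obtain hzero | htwo : ∑ j, f j = 0 ∨ ∑ j, f j = 2 := by omega
  · refine ⟨1, one_ne_zero, fun j => ?_⟩
    rw [one_mul, sum_eq_zero_iff.1 hzero j (mem_univ _),
      sum_eq_zero_iff.1 (hsum ▸ hzero : ∑ j, g j = 0) j (mem_univ _)]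
  · obtain ⟨j₀, hj₀, hfj⟩ := exists_eq_pair_indicator_of_sum_eq_two hK' hf0 hf htwo
    obtain ⟨j₁, hj₁, hgj⟩ := exists_eq_pair_indicator_of_sum_eq_two hK' hg0 hg (hsum ▸ htwo)
    have hs : j₁ / j₀ ≠ 0 := div_ne_zero hj₁ hj₀
    have hsj₀ : j₁ / j₀ * j₀ = j₁ := div_mul_cancel₀ j₁ hj₀
    refine ⟨j₁ / j₀, hs, fun j => ?_⟩
    generalize j₁ / j₀ = s at hs hsj₀ ⊢
    rw [hfj, hgj, ← hsj₀, ← mul_neg]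
    simp only [mul_right_inj' hs]

theorem sum_eq_mul_sum_div_add_sum_mod {ι : Type*} (s : Finset ι) (f : ι → ℕ) (p : ℕ) :
    ∑ j ∈ s, f j = p * ∑ j ∈ s, f j / p + ∑ j ∈ s, f j % p := by
  rw [mul_sum, ← sum_add_distrib]
  exact sum_congr rfl fun j _ => (Nat.div_add_mod (f j) p).symm

/-- Let p be an odd prime and a, b : ZMod p → ℕ with a 0 = b 0 = 0,
a and b symmetric under negation, ∑ a = ∑ b ≤ 4p − 4, p ∣ a j − b j (in ℤ) for
all j, and a j ≡ b j′ (mod p) for all nonzero j, j′.  Then there is a nonzero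
s ∈ ZMod p with a j = b (s·j) for every j. -/
theorem stmt2 (p : ℕ) [hp : Fact p.Prime] (hodd : Odd p)
    (a b : ZMod p → ℕ)
    (ha0 : a 0 = 0) (hb0 : b 0 = 0)
    (hasym : ∀ j, a (-j) = a j) (hbsym : ∀ j, b (-j) = b j)
    (hsum : ∑ j, a j = ∑ j, b j)
    (hle : ∑ j, a j ≤ 4 * p - 4)
    (hdvd : ∀ j, (p : ℤ) ∣ (a j : ℤ) - (b j : ℤ))
    (hcong : ∀ j j', j ≠ 0 → j' ≠ 0 → (p : ℤ) ∣ (a j : ℤ) - (b j' : ℤ)) :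
    ∃ s : ZMod p, s ≠ 0 ∧ ∀ j, a j = b (s * j) := by
  have hchar : ringChar (ZMod p) ≠ 2 := by
    rw [ZMod.ringChar_zmod_n]; rintro rfl; exact Nat.not_odd_iff_even.2 even_two hodd
  have hmod_sum : ∑ j, a j % p = ∑ j, b j % p :=
    sum_congr rfl fun j _ => (Nat.modEq_iff_dvd.2 (hdvd j)).symm
  have hdiv_sum : ∑ j, a j / p = ∑ j, b j / p := by
    have := sum_eq_mul_sum_div_add_sum_mod univ a p
    have := sum_eq_mul_sum_div_add_sum_mod univ b p
    exact Nat.eq_of_mul_eq_mul_left hp.out.pos (by linarith)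
  have hdiv_le : ∑ j, a j / p ≤ 3 := by
    have := sum_eq_mul_sum_div_add_sum_mod univ a p
    have : p * ∑ j, a j / p < p * 4 := by have := hp.out.pos; omega
    exact Nat.lt_succ_iff.1 (Nat.lt_of_mul_lt_mul_left this)
  obtain ⟨s, hs, hquot⟩ := exists_eq_comp_mul_of_sum_eq_of_sum_le_three hchar
    (f := fun j => a j / p) (g := fun j => b j / p) (by simp [ha0]) (by simp [hb0])
    (fun j => by simp only [hasym]) (fun j => by simp only [hbsym]) hdiv_sum hdiv_le
  refine ⟨s, hs, fun j => ?_⟩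
  have hres : a j % p = b (s * j) % p := by
    rcases eq_or_ne j 0 with rfl | hj
    · simp [ha0, hb0]
    · exact (Nat.modEq_iff_dvd.2 (hcong j (s * j) hj (mul_ne_zero hs hj))).symm
  rw [← Nat.div_add_mod (a j) p, ← Nat.div_add_mod (b (s * j)) p, hres]
  exact congrArg (p * · + _) (hquot j)
end

section
/- Let p be an odd prime and let k ≥ 1 be a natural number. Let N be the numerator of the rational number B_{k(p−1)} / (2k(p−1)) written in lowest terms, where B_{k(p−1)} is the k(p−1)-st Bernoulli number (the index k(p−1) is even, so the two sign conventions for Bernoulli numbers agree). Then p does not divide the integer (2^{k(p−1)−1} − 1) · N. -/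
/-!
Write `n = k(p - 1)`. Fermat gives `2^n ≡ 1 (mod p)`, so `2^(n-1) ≡ 1` would force `2 ≡ 1`.
By von Staudt–Clausen, `B_n + 1/p` is `p`-integral, so `B_n` has the same negative `p`-adic
valuation as `1/p`; dividing by the integer `2n` keeps it negative, so `p` divides the
denominator of `B_n / 2n` and hence not its numerator.
-/

open Finset

namespace Rat

variable {p : ℕ} [Fact p.Prime]

lemma padicValuation_inv_natCast_le_one {q : ℕ} (hq : ¬ p ∣ q) :
    padicValuation p (q : ℚ)⁻¹ ≤ 1 := by
  rw [padicValuation_le_one_iff, inv_natCast_den]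
  split_ifs <;> simp_all

lemma one_lt_padicValuation_inv_self : 1 < padicValuation p (p : ℚ)⁻¹ := by
  rw [map_inv₀, padicValuation_self]
  exact one_lt_inv_iff₀.mpr ⟨by simp, by decide⟩

lemma padicValuation_le_div_intCast (x : ℚ) {d : ℤ} (hd : d ≠ 0) :
    padicValuation p x ≤ padicValuation p (x / d) := by
  rw [map_div₀, le_div_iff₀ (by simpa [zero_lt_iff] using hd), padicValuation_cast]
  exact mul_le_of_le_one_right' (Int.padicValuation_le_one p d)

lemma not_dvd_num_of_one_lt_padicValuation {x : ℚ} (hx : 1 < padicValuation p x) :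
    ¬ (p : ℤ) ∣ x.num := by
  have hden : p ∣ x.den := not_not.mp (padicValuation_le_one_iff.not.mp hx.not_ge)
  intro hnum
  exact (Nat.Prime.one_lt Fact.out).ne'
    (Nat.eq_one_of_dvd_coprimes x.reduced (Int.natCast_dvd.mp hnum) hden)

end Rat

section

open Rat

variable {p : ℕ} [Fact p.Prime] {n : ℕ}

lemma padicValuation_bernoulli_add_inv_le_one (hn : Even n) (hn0 : n ≠ 0) (hpn : p - 1 ∣ n) :
    padicValuation p (bernoulli n + (p : ℚ)⁻¹) ≤ 1 := by
  obtain ⟨m, rfl⟩ := hn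
  rw [← two_mul] at hpn hn0 ⊢
  obtain ⟨z, hz⟩ := Bernoulli.vonStaudt_clausen m
  set S := {q ∈ range (2 * m + 2) | q.Prime ∧ q - 1 ∣ 2 * m}
  have hpS : p ∈ S := by
    have : p - 1 ≤ 2 * m := Nat.le_of_dvd (Nat.pos_of_ne_zero hn0) hpn
    exact mem_filter.mpr ⟨mem_range.mpr (by omega), Fact.out, hpn⟩
  rw [← add_sum_erase S _ hpS, one_div, ← add_assoc, eq_comm, ← eq_sub_iff_add_eq] at hz
  rw [hz]
  refine (padicValuation p).map_sub_le (Int.padicValuation_le_one p z)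
    ((padicValuation p).map_sum_le fun q hq => ?_)
  obtain ⟨hqp, hqS⟩ := mem_erase.mp hq
  rw [one_div]
  refine padicValuation_inv_natCast_le_one fun hpq => hqp ?_
  exact ((Nat.prime_dvd_prime_iff_eq Fact.out (mem_filter.mp hqS).2.1).mp hpq).symm

lemma one_lt_padicValuation_bernoulli (hn : Even n) (hn0 : n ≠ 0) (hpn : p - 1 ∣ n) :
    1 < padicValuation p (bernoulli n) := by
  have h := (padicValuation_bernoulli_add_inv_le_one hn hn0 hpn).trans_lt
    (one_lt_padicValuation_inv_self (p := p))
  rw [← add_sub_cancel_right (bernoulli n) (p : ℚ)⁻¹,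
    (padicValuation p).map_sub_eq_of_lt_right h]
  exact one_lt_padicValuation_inv_self

lemma not_intCast_dvd_two_pow_pred_sub_one (hodd : Odd p) (hn0 : n ≠ 0) (hpn : p - 1 ∣ n) :
    ¬ (p : ℤ) ∣ 2 ^ (n - 1) - 1 := by
  have h2 : (2 : ZMod p) ≠ 0 := by
    intro h
    have := (ZMod.natCast_eq_zero_iff 2 p).mp (by exact_mod_cast h)
    obtain rfl := (Nat.prime_dvd_prime_iff_eq Fact.out Nat.prime_two).mp this
    exact Nat.not_even_iff_odd.mpr hodd even_two
  have hpow : (2 : ZMod p) ^ n = 1 := by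
    obtain ⟨c, rfl⟩ := hpn
    rw [pow_mul, ZMod.pow_card_sub_one_eq_one h2, one_pow]
  rw [← ZMod.intCast_zmod_eq_zero_iff_dvd]
  push_cast
  intro h
  have : (2 : ZMod p) = 1 := by
    rw [← hpow, ← Nat.sub_add_cancel (Nat.one_le_iff_ne_zero.mpr hn0), pow_succ,
      sub_eq_zero.mp h, one_mul]
  exact one_ne_zero (α := ZMod p) (by linear_combination this)

end

/-- Let p be an odd prime and k ≥ 1.  Let N be the numerator of
B_{k(p−1)} / (2k(p−1)) in lowest terms, where B denotes the Bernoulli numbers.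
Then p does not divide (2^{k(p−1)−1} − 1) · N. -/
theorem stmt6 (p k : ℕ) (hp : p.Prime) (hodd : Odd p) (hk : 1 ≤ k) :
    ¬ ((p : ℤ) ∣
        ((2 : ℤ) ^ (k * (p - 1) - 1) - 1) *
          (bernoulli (k * (p - 1)) / (2 * k * (p - 1) : ℚ)).num) := by
  have : Fact p.Prime := ⟨hp⟩
  have hn0 : k * (p - 1) ≠ 0 := Nat.mul_ne_zero (by omega) (by have := hp.two_le; omega)
  have hn : Even (k * (p - 1)) := (Nat.Odd.sub_odd hodd odd_one).mul_left k
  have hpn : p - 1 ∣ k * (p - 1) := dvd_mul_left _ _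
  have hd : (2 * k * (p - 1) : ℚ) = ((2 * k * (p - 1) : ℕ) : ℤ) := by
    push_cast [Nat.cast_sub hp.one_le]; ring
  rw [(Nat.prime_iff_prime_int.mp hp).dvd_mul, hd, not_or]
  refine ⟨not_intCast_dvd_two_pow_pred_sub_one hodd hn0 hpn,
    Rat.not_dvd_num_of_one_lt_padicValuation ?_⟩
  exact (one_lt_padicValuation_bernoulli hn hn0 hpn).trans_le
    (Rat.padicValuation_le_div_intCast _ (by simpa [mul_assoc] using hn0))
end

section
/- Let p be a prime and let m, N be natural numbers. Let G and H be finite cyclic groups, each of order p^m, and let e : G → H be a bijection of the underlying sets. Suppose G ⊇ F₀ ⊇ F₁ ⊇ ⋯ ⊇ F_N is a decreasing chain of subsets of G with F₀ = G and F_N = {1}, such that: each F_i is the underlying set of a subgroup of G; each image e(F_i) is the underlying set of a subgroup of H; and for each i the index of F_{i+1} in F_i (as subgroups of G) is either 1 or p. Then for every x ∈ G, the order of x in G equals the order of e(x) in H. -/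
/-!
In a finite cyclic group the only subgroup of order `n` is `{x | x ^ n = 1}`.
Since the cardinalities of the `F i` descend from `p ^ m` to `1` in steps of `1` or `p`, every `p ^ t`
with `t ≤ m` is the order of some `F i`, so `e` maps `{x | x ^ p ^ t = 1}` onto `{y | y ^ p ^ t = 1}`;
these sets determine the orders of elements.
-/

theorem IsCyclic.coe_subgroup_eq_setOf_pow_card_eq_one {G : Type*} [Group G] [Finite G]
    [IsCyclic G] (K : Subgroup G) : (K : Set G) = {x | x ^ Nat.card K = 1} := by
  classical
  cases nonempty_fintype G
  refine Set.eq_of_subset_of_ncard_le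
    (fun x hx => orderOf_dvd_iff_pow_eq_one.1 (K.orderOf_dvd_natCard hx)) ?_
  rw [← Finset.coe_filter_univ, Set.ncard_coe_finset, ← Nat.card_coe_set_eq]
  exact IsCyclic.card_pow_eq_one_le Nat.card_pos

section PowerSteps

variable {p N : ℕ} {f : ℕ → ℕ}

theorem exists_eq_pow_of_eq_or_eq_mul_succ
    (hstep : ∀ i < N, f i = f (i + 1) ∨ f i = p * f (i + 1)) (hN : f N = 1) {i : ℕ}
    (hi : i ≤ N) : ∃ k, f i = p ^ k := by
  induction hi using Nat.decreasingInduction with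
  | self => exact ⟨0, hN⟩
  | of_succ i hi ih =>
    obtain ⟨k, hk⟩ := ih
    rcases hstep i hi with h | h
    · exact ⟨k, h.trans hk⟩
    · exact ⟨k + 1, by rw [h, hk, pow_succ']⟩

theorem exists_eq_pow_of_pow_le_of_eq_or_eq_mul_succ (hp : 1 < p)
    (hstep : ∀ i < N, f i = f (i + 1) ∨ f i = p * f (i + 1)) (hN : f N = 1) {t : ℕ}
    (ht : p ^ t ≤ f 0) : ∃ i ≤ N, f i = p ^ t := by
  suffices ∀ i ≤ N, p ^ t ≤ f i → ∃ j ≤ N, f j = p ^ t from this 0 N.zero_le ht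
  intro i hi
  induction hi using Nat.decreasingInduction with
  | self => exact fun h => ⟨N, le_rfl, by have := Nat.one_le_pow t p (by omega); omega⟩
  | of_succ i hi ih =>
    intro hle
    obtain heq | hlt := hle.eq_or_lt
    · exact ⟨i, hi.le, heq.symm⟩
    refine ih ?_
    rcases hstep i hi with h | h
    · exact h ▸ hle
    · obtain ⟨k, hk⟩ := exists_eq_pow_of_eq_or_eq_mul_succ hstep hN hi
      rw [h, hk, ← pow_succ', Nat.pow_lt_pow_iff_right hp] at hlt
      exact hk ▸ Nat.pow_le_pow_right (by omega) (Nat.lt_succ_iff.1 hlt)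

end PowerSteps

theorem orderOf_eq_orderOf_of_pow_eq_one_iff {G H : Type*} [Monoid G] [Monoid H] {x : G} {y : H}
    {n : ℕ} (hx : orderOf x ∣ n) (hy : orderOf y ∣ n) (h : ∀ d, d ∣ n → (x ^ d = 1 ↔ y ^ d = 1)) :
    orderOf x = orderOf y :=
  Nat.dvd_antisymm (orderOf_dvd_of_pow_eq_one ((h _ hy).2 (pow_orderOf_eq_one y)))
    (orderOf_dvd_of_pow_eq_one ((h _ hx).1 (pow_orderOf_eq_one x)))

theorem stmt7_general (p m N : ℕ) (hp : p.Prime)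
    (G H : Type*) [Group G] [Group H] [Finite G] [Finite H]
    [IsCyclic G] [IsCyclic H]
    (hG : Nat.card G = p ^ m) (hH : Nat.card H = p ^ m)
    (e : G → H) (he : Function.Bijective e)
    (F : ℕ → Set G)
    (hF0 : F 0 = Set.univ) (hFN : F N = {1})
    (hsubG : ∀ i ≤ N, ∃ S : Subgroup G, (S : Set G) = F i)
    (hsubH : ∀ i ≤ N, ∃ T : Subgroup H, (T : Set H) = e '' F i)
    (hindex : ∀ i < N,
      Nat.card (F i) = Nat.card (F (i + 1)) ∨
        Nat.card (F i) = p * Nat.card (F (i + 1))) :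
    ∀ x : G, orderOf (e x) = orderOf x := by
  intro x
  refine orderOf_eq_orderOf_of_pow_eq_one_iff (hH ▸ orderOf_dvd_natCard (e x))
    (hG ▸ orderOf_dvd_natCard x) fun d hd => ?_
  obtain ⟨t, ht, rfl⟩ := (Nat.dvd_prime_pow hp).1 hd
  obtain ⟨i, hi, hcard⟩ := exists_eq_pow_of_pow_le_of_eq_or_eq_mul_succ hp.one_lt hindex
    (by rw [hFN, Nat.card_unique]) (t := t)
    (by rwa [hF0, Nat.card_univ, hG, Nat.pow_le_pow_iff_right hp.one_lt])
  obtain ⟨S, hS⟩ := hsubG i hi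
  obtain ⟨T, hT⟩ := hsubH i hi
  have hSpow : F i = {y | y ^ p ^ t = 1} := by
    rw [← hS, IsCyclic.coe_subgroup_eq_setOf_pow_card_eq_one S, ← hcard, ← hS]; rfl
  have hTpow : e '' F i = {y | y ^ p ^ t = 1} := by
    rw [← hT, IsCyclic.coe_subgroup_eq_setOf_pow_card_eq_one T, ← hcard,
      ← Nat.card_image_of_injective he.1, ← hT]; rfl
  calc e x ^ p ^ t = 1 ↔ e x ∈ e '' F i := by rw [hTpow]; rfl
    _ ↔ x ∈ F i := he.1.mem_set_image
    _ ↔ x ^ p ^ t = 1 := by rw [hSpow]; rfl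

/-- Let p be a prime, G and H finite cyclic groups of order p^m,
and e : G → H a bijection.  Suppose F 0 ⊇ F 1 ⊇ ⋯ ⊇ F N is a decreasing chain
of subsets of G with F 0 = G and F N = {1}, each F i the carrier of a subgroup
of G, each image e '' F i the carrier of a subgroup of H, and each index of
F (i+1) in F i equal to 1 or p.  Then orderOf (e x) = orderOf x for all x. -/
theorem stmt7 (p m N : ℕ) (hp : p.Prime)
    (G H : Type*) [Group G] [Group H] [Finite G] [Finite H]
    [IsCyclic G] [IsCyclic H]
    (hG : Nat.card G = p ^ m) (hH : Nat.card H = p ^ m)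
    (e : G → H) (he : Function.Bijective e)
    (F : ℕ → Set G)
    (hchain : ∀ i < N, F (i + 1) ⊆ F i)
    (hF0 : F 0 = Set.univ) (hFN : F N = {1})
    (hsubG : ∀ i ≤ N, ∃ S : Subgroup G, (S : Set G) = F i)
    (hsubH : ∀ i ≤ N, ∃ T : Subgroup H, (T : Set H) = e '' F i)
    (hindex : ∀ i < N,
      Nat.card (F i) = Nat.card (F (i + 1)) ∨
        Nat.card (F i) = p * Nat.card (F (i + 1))) :
    ∀ x : G, orderOf (e x) = orderOf x :=
  stmt7_general p m N hp G H hG hH e he F hF0 hFN hsubG hsubH hindex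
end

section
/- Let p be a prime, let ℤ_p denote the additive group of p-adic integers, and let e : ℤ_p → ℤ_p be a bijection of the underlying set. Suppose F₀ ⊇ F₁ ⊇ F₂ ⊇ ⋯ is a decreasing sequence of additive subgroups of ℤ_p with F₀ = ℤ_p and ⋂_n F_n = {0}, such that for each n the subgroup F_{n+1} has finite index at most p in F_n; and suppose that each image e(F_n) is the underlying set of an additive subgroup of ℤ_p and that for each n the subgroup e(F_{n+1}) has finite index at most p in e(F_n). Then for every x ∈ ℤ_p and every natural number r, p^r divides x in ℤ_p if and only if p^r divides e(x) in ℤ_p. -/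
/-!
A finite-index additive subgroup `H` of `ℤ_[p]` contains `(index H) ℤ_[p] = p ^ a ℤ_[p]`, and since
`ℕ` is dense in `ℤ_[p]` modulo `p ^ a`, `H` is then an ideal, i.e. `H = p ^ b ℤ_[p]`. So both chains
are of the form `p ^ b n ℤ_[p]` and `p ^ c n ℤ_[p]`, where `b` and `c` start at `0` and grow by at
most `1` per step (the index `p ^ (b (n+1) - b n)` is at most `p`). Because `e` is a bijection, the
chain `F` is stationary at step `n` exactly when `E` is, hence `b = c`. As `⋂ F n = 0`, `b` is
unbounded, so it takes every value `r`, and then `p ^ r ∣ x ↔ x ∈ F n ↔ e x ∈ E n ↔ p ^ r ∣ e x`.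
-/

theorem Nat.exists_eq_of_map_succ_le_add_one {b : ℕ → ℕ} (hb : ∀ n, b (n + 1) ≤ b n + 1) {r m : ℕ}
    (h0 : b 0 ≤ r) (hm : r ≤ b m) : ∃ n, b n = r := by
  induction m with
  | zero => exact ⟨0, le_antisymm h0 hm⟩
  | succ m ih =>
    by_cases hr : r ≤ b m
    · exact ih hr
    · exact ⟨m + 1, by have := hb m; omega⟩

theorem Nat.eq_of_map_succ_eq_iff {b c : ℕ → ℕ} (h0 : b 0 = c 0)
    (hb : ∀ n, b n ≤ b (n + 1) ∧ b (n + 1) ≤ b n + 1)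
    (hc : ∀ n, c n ≤ c (n + 1) ∧ c (n + 1) ≤ c n + 1)
    (hbc : ∀ n, b (n + 1) = b n ↔ c (n + 1) = c n) : b = c := by
  funext n
  induction n with
  | zero => exact h0
  | succ n ih => have := hb n; have := hc n; have := hbc n; omega

namespace PadicInt

variable {p : ℕ} [Fact p.Prime]

theorem span_pow_le_span_pow_iff {m n : ℕ} :
    Ideal.span {(p : ℤ_[p]) ^ m} ≤ Ideal.span {(p : ℤ_[p]) ^ n} ↔ n ≤ m := by
  rw [Ideal.span_singleton_le_span_singleton,
    pow_dvd_pow_iff prime_p.ne_zero prime_p.not_isUnit]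

theorem index_span_pow (n : ℕ) :
    (Ideal.span {(p : ℤ_[p]) ^ n}).toAddSubgroup.index = p ^ n := by
  have hker : (toZModPow (p := p) n).toAddMonoidHom.ker =
      (Ideal.span {(p : ℤ_[p]) ^ n}).toAddSubgroup := by
    rw [← ker_toZModPow]; rfl
  rw [← hker, AddSubgroup.index_ker, AddMonoidHom.range_eq_top.2 (ZMod.ringHom_surjective _),
    AddSubgroup.card_top, Nat.card_zmod]

theorem relIndex_span_pow {m n : ℕ} (h : m ≤ n) :
    (Ideal.span {(p : ℤ_[p]) ^ n}).toAddSubgroup.relIndex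
      (Ideal.span {(p : ℤ_[p]) ^ m}).toAddSubgroup = p ^ (n - m) := by
  have := AddSubgroup.relIndex_mul_index
    ((Submodule.toAddSubgroup_le _ _).2 (span_pow_le_span_pow_iff (p := p).2 h))
  rw [index_span_pow, index_span_pow, ← Nat.pow_sub_mul_pow p h] at this
  exact Nat.eq_of_mul_eq_mul_right (pow_pos (Fact.out : p.Prime).pos m) this

theorem mul_mem_of_span_pow_le {H : AddSubgroup ℤ_[p]} {a : ℕ}
    (ha : (Ideal.span {(p : ℤ_[p]) ^ a}).toAddSubgroup ≤ H) (z : ℤ_[p]) {x : ℤ_[p]}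
    (hx : x ∈ H) : z * x ∈ H := by
  have hz : (z - z.appr a) * x ∈ H := ha (Ideal.mul_mem_right _ _ (appr_spec a z))
  simpa [sub_mul, ← nsmul_eq_mul] using H.add_mem hz (H.nsmul_mem hx (z.appr a))

theorem exists_eq_span_pow_of_index_ne_zero {H : AddSubgroup ℤ_[p]} (hH : H.index ≠ 0) :
    ∃ n, H = (Ideal.span {(p : ℤ_[p]) ^ n}).toAddSubgroup := by
  obtain ⟨a, ha⟩ := ideal_eq_span_pow_p (s := Ideal.span {(H.index : ℤ_[p])})
    (by simpa using hH)
  have hle : (Ideal.span {(p : ℤ_[p]) ^ a}).toAddSubgroup ≤ H := by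
    intro x hx
    obtain ⟨y, rfl⟩ := Ideal.mem_span_singleton'.1 (ha ▸ hx : x ∈ Ideal.span {(H.index : ℤ_[p])})
    simpa [nsmul_eq_mul, mul_comm] using H.nsmul_index_mem y
  let I : Ideal ℤ_[p] := { H.toAddSubmonoid with smul_mem' := mul_mem_of_span_pow_le hle }
  have hI : I ≠ ⊥ := fun h ↦ pow_ne_zero a prime_p.ne_zero <|
    (Submodule.eq_bot_iff I).1 h _ (hle (Ideal.mem_span_singleton_self _))
  obtain ⟨n, hn⟩ := ideal_eq_span_pow_p hI
  exact ⟨n, by rw [← hn]⟩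

theorem span_pow_injective :
    Function.Injective fun n : ℕ ↦ Ideal.span {(p : ℤ_[p]) ^ n} := fun _ _ h ↦
  le_antisymm (span_pow_le_span_pow_iff.1 h.ge) (span_pow_le_span_pow_iff.1 h.le)

theorem exists_exponents_of_relIndex_le {G : ℕ → AddSubgroup ℤ_[p]} (h0 : G 0 = ⊤)
    (hG : ∀ n, G (n + 1) ≤ G n)
    (hidx : ∀ n, (G (n + 1)).relIndex (G n) ≠ 0 ∧ (G (n + 1)).relIndex (G n) ≤ p) :
    ∃ b : ℕ → ℕ, b 0 = 0 ∧ (∀ n, b n ≤ b (n + 1) ∧ b (n + 1) ≤ b n + 1) ∧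
      ∀ n, G n = (Ideal.span {(p : ℤ_[p]) ^ b n}).toAddSubgroup := by
  have hfin : ∀ n, (G n).index ≠ 0 := by
    intro n
    induction n with
    | zero => simp [h0]
    | succ n ih => rw [← AddSubgroup.relIndex_mul_index (hG n)]; exact mul_ne_zero (hidx n).1 ih
  choose b hb using fun n ↦ exists_eq_span_pow_of_index_ne_zero (hfin n)
  have hmono (n : ℕ) : b n ≤ b (n + 1) := by
    have := hG n
    rwa [hb, hb, Submodule.toAddSubgroup_le, span_pow_le_span_pow_iff] at this
  refine ⟨b, ?_, fun n ↦ ⟨hmono n, ?_⟩, hb⟩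
  · have : (Ideal.span {(p : ℤ_[p]) ^ 0}).toAddSubgroup ≤ G 0 := by simp [h0]
    rwa [hb, Submodule.toAddSubgroup_le, span_pow_le_span_pow_iff, Nat.le_zero] at this
  · have := (hidx n).2
    rw [hb, hb, relIndex_span_pow (hmono n)] at this
    have := (Nat.pow_le_pow_iff_right (Fact.out : p.Prime).one_lt).1 (this.trans (pow_one p).ge)
    omega

theorem exists_le_of_iInf_span_pow_eq_bot {b : ℕ → ℕ}
    (h : ⨅ n, (Ideal.span {(p : ℤ_[p]) ^ b n}).toAddSubgroup = ⊥) (r : ℕ) : ∃ n, r ≤ b n := by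
  by_contra! hr
  have : (Ideal.span {(p : ℤ_[p]) ^ r}).toAddSubgroup ≤
      ⨅ n, (Ideal.span {(p : ℤ_[p]) ^ b n}).toAddSubgroup :=
    le_iInf fun n ↦ (Submodule.toAddSubgroup_le _ _).2 (span_pow_le_span_pow_iff.2 (hr n).le)
  rw [h] at this
  exact pow_ne_zero r prime_p.ne_zero (this (Ideal.mem_span_singleton_self _))

end PadicInt

/-- Let p be a prime, e : ℤ_p → ℤ_p a bijection of the p-adic
integers, and F 0 ⊇ F 1 ⊇ ⋯ a decreasing sequence of additive subgroups of
ℤ_p with F 0 = ℤ_p and ⋂ F n = {0}, each F (n+1) of finite index at most p in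
F n.  Suppose each image e '' F n is the carrier of an additive subgroup E n,
and each E (n+1) has finite index at most p in E n.  Then for every x and
every r, p^r ∣ x in ℤ_p if and only if p^r ∣ e x. -/
theorem stmt8 (p : ℕ) [Fact p.Prime]
    (e : ℤ_[p] → ℤ_[p]) (he : Function.Bijective e)
    (F E : ℕ → AddSubgroup ℤ_[p])
    (hF0 : F 0 = ⊤) (hFinf : (⨅ n, F n) = ⊥)
    (hchain : ∀ n, F (n + 1) ≤ F n)
    (hFidx : ∀ n, (F (n + 1)).relIndex (F n) ≠ 0 ∧ (F (n + 1)).relIndex (F n) ≤ p)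
    (hE : ∀ n, (E n : Set ℤ_[p]) = e '' (F n : Set ℤ_[p]))
    (hEidx : ∀ n, (E (n + 1)).relIndex (E n) ≠ 0 ∧ (E (n + 1)).relIndex (E n) ≤ p) :
    ∀ (x : ℤ_[p]) (r : ℕ), ((p : ℤ_[p]) ^ r ∣ x ↔ (p : ℤ_[p]) ^ r ∣ e x) := by
  have hE0 : E 0 = ⊤ := by
    rw [← SetLike.coe_set_eq, hE, hF0, AddSubgroup.coe_top, Set.image_univ_of_surjective he.2]
  have hEchain (n : ℕ) : E (n + 1) ≤ E n := by
    rw [← SetLike.coe_subset_coe, hE, hE]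
    exact Set.image_mono (hchain n)
  obtain ⟨b, hb0, hb, hFb⟩ := PadicInt.exists_exponents_of_relIndex_le hF0 hchain hFidx
  obtain ⟨c, hc0, hc, hEc⟩ := PadicInt.exists_exponents_of_relIndex_le hE0 hEchain hEidx
  have hFE (n : ℕ) : F (n + 1) = F n ↔ E (n + 1) = E n := by
    rw [← SetLike.coe_set_eq, ← SetLike.coe_set_eq (p := E (n + 1)), hE, hE,
      (Set.image_injective.2 he.1).eq_iff]
  have hbc : b = c := Nat.eq_of_map_succ_eq_iff (hb0.trans hc0.symm) hb hc fun n ↦ by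
    simpa only [hFb, hEc, Submodule.toAddSubgroup_inj, PadicInt.span_pow_injective.eq_iff]
      using hFE n
  intro x r
  obtain ⟨m, hm⟩ := PadicInt.exists_le_of_iInf_span_pow_eq_bot (funext hFb ▸ hFinf) r
  obtain ⟨n, rfl⟩ :=
    Nat.exists_eq_of_map_succ_le_add_one (fun n ↦ (hb n).2) (hb0.trans_le r.zero_le) hm
  have hx : x ∈ F n ↔ e x ∈ E n := by
    rw [← SetLike.mem_coe (x := e x), hE, he.1.mem_set_image, SetLike.mem_coe]
  rwa [hFb, hEc, ← hbc, Submodule.mem_toAddSubgroup, Submodule.mem_toAddSubgroup,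
    Ideal.mem_span_singleton, Ideal.mem_span_singleton] at hx
end
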